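/- arXiv:2306.00297 — 2 statements merged into one kernel-verified Lean document; each statement's English description precedes it below -/
import Mathlib

section
/- With U_Σ = Σ^{1/2} U Σ^{-1/2} for orthogonal U and Σ ≻ 0, and A_ℓ = a_ℓ Σ^{-1}, the product map satisfies G(U_Σ X₀, A) = U_Σ G(X₀, A), where G(X, A) = X ∏_{ℓ=0}^{k}(I + M X^⊤ A_ℓ X) and M = diag(I_n, 0). -/
/- The layer factors only see `X` through the Gram-type products `Xᵀ A_ℓ X`, which are unchanged
by `X ↦ W X` as soon as `W` preserves every form `A_ℓ`; then `G(W X) = W X ∏ … = W G(X)`.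
With `Σ = P Pᵀ` and `W = P U P⁻¹` for orthogonal `U`, one computes
`Wᵀ Σ⁻¹ W = P⁻ᵀ Uᵀ U P⁻¹ = Σ⁻¹`, so `W` preserves every scalar multiple of `Σ⁻¹`. -/

open Matrix

/-- The product of attention layers:
`G(X, A) = X ∏_{ℓ=0}^{k} (I + M Xᵀ A_ℓ X)` (ordered product). -/
noncomputable def Gprod (d n k : ℕ) (M : Matrix (Fin (n + 1)) (Fin (n + 1)) ℝ)
    (A : ℕ → Matrix (Fin d) (Fin d) ℝ) (X : Matrix (Fin d) (Fin (n + 1)) ℝ) :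
    Matrix (Fin d) (Fin (n + 1)) ℝ :=
  X * ((List.range (k + 1)).map fun ℓ => 1 + M * Xᵀ * A ℓ * X).prod

theorem Gprod_mul_left {d n k : ℕ} (M : Matrix (Fin (n + 1)) (Fin (n + 1)) ℝ)
    (A : ℕ → Matrix (Fin d) (Fin d) ℝ) (W : Matrix (Fin d) (Fin d) ℝ)
    (hW : ∀ ℓ, Wᵀ * A ℓ * W = A ℓ) (X : Matrix (Fin d) (Fin (n + 1)) ℝ) :
    Gprod d n k M A (W * X) = W * Gprod d n k M A X := by
  have hgram : ∀ ℓ, (W * X)ᵀ * A ℓ * (W * X) = Xᵀ * A ℓ * X := fun ℓ => by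
    conv_rhs => rw [← hW ℓ]
    simp only [transpose_mul, Matrix.mul_assoc]
  simp only [Gprod, Matrix.mul_assoc M, hgram, Matrix.mul_assoc W]

theorem transpose_mul_inv_mul_eq_of_orthogonal {ι R : Type*} [Fintype ι] [DecidableEq ι]
    [CommRing R] {P U : Matrix ι ι R} (hP : IsUnit P.det) (hU : Uᵀ * U = 1) :
    (P * U * P⁻¹)ᵀ * (P * Pᵀ)⁻¹ * (P * U * P⁻¹) = (P * Pᵀ)⁻¹ := by
  have hPT : IsUnit Pᵀ.det := by rwa [det_transpose]
  calc (P * U * P⁻¹)ᵀ * (P * Pᵀ)⁻¹ * (P * U * P⁻¹)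
      = P⁻¹ᵀ * Uᵀ * (Pᵀ * Pᵀ⁻¹) * (P⁻¹ * P) * U * P⁻¹ := by
        simp only [transpose_mul, Matrix.mul_inv_rev, Matrix.mul_assoc]
    _ = P⁻¹ᵀ * (Uᵀ * U) * P⁻¹ := by
        simp only [mul_nonsing_inv _ hPT, nonsing_inv_mul _ hP, Matrix.mul_one, Matrix.mul_assoc]
    _ = (P * Pᵀ)⁻¹ := by
        rw [hU, Matrix.mul_one, Matrix.mul_inv_rev, transpose_nonsing_inv]

theorem stmt13_general (d n k : ℕ) (S Ssqrt U : Matrix (Fin d) (Fin d) ℝ)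
    (hsqrt : Ssqrt.PosDef) (hsq : Ssqrt * Ssqrt = S)
    (hU : Uᵀ * U = 1)
    (A : ℕ → Matrix (Fin d) (Fin d) ℝ) (a : ℕ → ℝ)
    (hA : ∀ ℓ, A ℓ = a ℓ • S⁻¹)
    (M : Matrix (Fin (n + 1)) (Fin (n + 1)) ℝ)
    (X₀ : Matrix (Fin d) (Fin (n + 1)) ℝ) :
    Gprod d n k M A ((Ssqrt * U * Ssqrt⁻¹) * X₀)
      = (Ssqrt * U * Ssqrt⁻¹) * Gprod d n k M A X₀ := by
  have hsymm : Ssqrtᵀ = Ssqrt := by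
    rw [← conjTranspose_eq_transpose_of_trivial, hsqrt.isHermitian.eq]
  have hdet : IsUnit Ssqrt.det := hsqrt.det_pos.ne'.isUnit
  refine Gprod_mul_left M A _ (fun ℓ => ?_) X₀
  have hgram : Ssqrt * Ssqrtᵀ = S := by rw [hsymm, hsq]
  rw [hA, Matrix.mul_smul, Matrix.smul_mul, ← hgram,
    transpose_mul_inv_mul_eq_of_orthogonal hdet hU]

/-- Equivariance of `G` under `U_Σ = Σ^{1/2} U Σ^{-1/2}` when every `A_ℓ` is a scalar
multiple of `Σ⁻¹`:  `G(U_Σ X₀, A) = U_Σ G(X₀, A)`. -/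
theorem stmt13 (d n k : ℕ) (S Ssqrt U : Matrix (Fin d) (Fin d) ℝ)
    (hS : S.PosDef) (hsqrt : Ssqrt.PosDef) (hsq : Ssqrt * Ssqrt = S)
    (hU : Uᵀ * U = 1)
    (A : ℕ → Matrix (Fin d) (Fin d) ℝ) (a : ℕ → ℝ)
    (hA : ∀ ℓ, A ℓ = a ℓ • S⁻¹)
    (M : Matrix (Fin (n + 1)) (Fin (n + 1)) ℝ)
    (hM : M = Matrix.diagonal fun i => if i = Fin.last n then (0 : ℝ) else 1)
    (X₀ : Matrix (Fin d) (Fin (n + 1)) ℝ) :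
    Gprod d n k M A ((Ssqrt * U * Ssqrt⁻¹) * X₀)
      = (Ssqrt * U * Ssqrt⁻¹) * Gprod d n k M A X₀ :=
  stmt13_general d n k S Ssqrt U hsqrt hsq hU A a hA M X₀
end

section
/- Suppose X, Y follow the coupled dynamics X_{i+1} = X_i + B_i X_i M X_i^⊤ A_i X_i and Y_{i+1} = Y_i + Y_i M X_i^⊤ A_i X_i, where B_i = b_i I and A_i = a_i Σ^{-1} for scalars a_i, b_i. If X₀ is replaced by U_Σ X₀ (U_Σ = Σ^{1/2}UΣ^{-1/2}, U orthogonal), then X_i(U_Σ X₀) = U_Σ X_i(X₀) for all i. -/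
open Matrix

/-- Coupled dynamics `X_{i+1} = X_i + B_i X_i M X_iᵀ A_i X_i`,
`Y_{i+1} = Y_i + Y_i M X_iᵀ A_i X_i`, with `B_i = b_i I` and `A_i = a_i Σ⁻¹`.
If the initialization is replaced by `U_Σ X₀` (with `U_Σ = Σ^{1/2} U Σ^{-1/2}`,
`U` orthogonal), then `X_i(U_Σ X₀) = U_Σ X_i(X₀)` for all `i`. -/
theorem stmt14 (d n : ℕ) (S Ssqrt U : Matrix (Fin d) (Fin d) ℝ)
    (hS : S.PosDef) (hsqrt : Ssqrt.PosDef) (hsq : Ssqrt * Ssqrt = S)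
    (hU : Uᵀ * U = 1)
    (A B : ℕ → Matrix (Fin d) (Fin d) ℝ) (a b : ℕ → ℝ)
    (hA : ∀ i, A i = a i • S⁻¹) (hB : ∀ i, B i = b i • 1)
    (M : Matrix (Fin (n + 1)) (Fin (n + 1)) ℝ)
    (hM : M = Matrix.diagonal fun i => if i = Fin.last n then (0 : ℝ) else 1)
    (X X' : ℕ → Matrix (Fin d) (Fin (n + 1)) ℝ)
    (Y Y' : ℕ → Matrix (Fin 1) (Fin (n + 1)) ℝ)
    (hX : ∀ i, X (i + 1) = X i + B i * X i * M * (X i)ᵀ * A i * X i)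
    (hY : ∀ i, Y (i + 1) = Y i + Y i * M * (X i)ᵀ * A i * X i)
    (hX' : ∀ i, X' (i + 1) = X' i + B i * X' i * M * (X' i)ᵀ * A i * X' i)
    (hY' : ∀ i, Y' (i + 1) = Y' i + Y' i * M * (X' i)ᵀ * A i * X' i)
    (h0 : X' 0 = (Ssqrt * U * Ssqrt⁻¹) * X 0) :
    ∀ i, X' i = (Ssqrt * U * Ssqrt⁻¹) * X i := by
  set V := Ssqrt * U * Ssqrt⁻¹ with hV
  have hinv : Invertible Ssqrt := hsqrt.isUnit.invertible
  have hSsym : Ssqrtᵀ = Ssqrt := hsqrt.isHermitian.eq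
  have hSinv : S⁻¹ = Ssqrt⁻¹ * Ssqrt⁻¹ := by
    rw [← hsq, Matrix.mul_inv_rev]
  have hss : Ssqrt * Ssqrt⁻¹ = 1 := Matrix.mul_inv_of_invertible Ssqrt
  have hss' : Ssqrt⁻¹ * Ssqrt = 1 := Matrix.inv_mul_of_invertible Ssqrt
  have hVT : Vᵀ = Ssqrt⁻¹ * Uᵀ * Ssqrt := by
    simp [hV, Matrix.transpose_mul, Matrix.transpose_nonsing_inv, hSsym,
      Matrix.mul_assoc]
  have key : Vᵀ * S⁻¹ * V = S⁻¹ := by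
    rw [hVT, hSinv, hV]
    calc Ssqrt⁻¹ * Uᵀ * Ssqrt * (Ssqrt⁻¹ * Ssqrt⁻¹) * (Ssqrt * U * Ssqrt⁻¹)
        = Ssqrt⁻¹ * Uᵀ * ((Ssqrt * Ssqrt⁻¹) * ((Ssqrt⁻¹ * Ssqrt) * (U * Ssqrt⁻¹))) := by
          simp only [Matrix.mul_assoc]
      _ = Ssqrt⁻¹ * ((Uᵀ * U) * Ssqrt⁻¹) := by
          rw [hss, hss']; simp [Matrix.mul_assoc]
      _ = Ssqrt⁻¹ * Ssqrt⁻¹ := by rw [hU, Matrix.one_mul]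
  have key2 : ∀ (W : Matrix (Fin d) (Fin (n + 1)) ℝ),
      Vᵀ * (S⁻¹ * (V * W)) = S⁻¹ * W := by
    intro W
    calc Vᵀ * (S⁻¹ * (V * W)) = (Vᵀ * S⁻¹ * V) * W := by
          simp only [Matrix.mul_assoc]
      _ = S⁻¹ * W := by rw [key]
  intro i
  induction i with
  | zero => exact h0
  | succ i ih =>
    rw [hX', hX, ih, hA, hB]
    simp only [Matrix.mul_add, Matrix.smul_mul, Matrix.mul_smul, Matrix.one_mul,
      Matrix.mul_assoc, Matrix.transpose_mul, smul_smul, mul_comm (b i) (a i)]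
    rw [key2]
end
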